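/- Fix natural numbers m and n. For every unit w of the group ring ℤ[ℤ × ℤ], there exist integers s and t such that w^(2(m+1)(n+1)) = single ((m+1)·s, (n+1)·t) 1. (In terms of quantum homology: since every unit of Q_enr(ℂP^m × ℂP^n) is monomial, the (2(m+1)(n+1))-th power of any unit, in particular of any Seidel element, equals the fundamental class times an invertible Novikov coefficient.) -/

import Mathlib

/-!
Since `ℤ × ℤ` is a linearly ordered group, any two finite subsets `A`, `B` with `#A * #B > 1`
admit two distinct pairs whose sums are attained uniquely in `A + B`. Unless `w` and `w⁻¹` are
monomials, applying this to their supports gives `w * w⁻¹ = 1` two nonzero coefficients; hence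
every unit is a monomial `single p r` with `r = ±1`, and its `2(m+1)(n+1)`-th power is
`single (2(m+1)(n+1) • p) 1`.
-/

open Finset

namespace AddMonoidAlgebra

variable {R A : Type*} [Semiring R]

theorem exists_eq_single_of_card_support_eq_one {f : AddMonoidAlgebra R A}
    (hf : #f.coeff.support = 1) : ∃ a r, f = single a r := by
  obtain ⟨a, -, ha⟩ := Finsupp.card_support_eq_one.mp hf
  exact ⟨a, f.coeff a, coeff_injective (by rw [coeff_single]; exact ha)⟩

variable [NoZeroDivisors R]

theorem one_lt_card_support_mul [Add A] [TwoUniqueSums A] {f g : AddMonoidAlgebra R A}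
    (h : 1 < #f.coeff.support * #g.coeff.support) : 1 < #(f * g).coeff.support := by
  obtain ⟨p, hp, q, hq, hpq, hpu, hqu⟩ := TwoUniqueSums.uniqueAdd_of_one_lt_card h
  rw [mem_product] at hp hq
  have add_mem_support {a b : A} (hab : UniqueAdd f.coeff.support g.coeff.support a b)
      (ha : a ∈ f.coeff.support) (hb : b ∈ g.coeff.support) : a + b ∈ (f * g).coeff.support := by
    rw [Finsupp.mem_support_iff, coeff_mul_add_of_uniqueAdd hab]
    exact mul_ne_zero (Finsupp.mem_support_iff.mp ha) (Finsupp.mem_support_iff.mp hb)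
  refine one_lt_card.mpr ⟨_, add_mem_support hpu hp.1 hp.2, _, add_mem_support hqu hq.1 hq.2,
    fun hsum => hpq ?_⟩
  obtain ⟨h₁, h₂⟩ := hpu hq.1 hq.2 hsum.symm
  exact (Prod.ext h₁ h₂).symm

variable [Nontrivial R]

theorem exists_eq_single_of_mul_eq_one [AddZeroClass A] [TwoUniqueSums A]
    {f g : AddMonoidAlgebra R A} (h : f * g = 1) :
    ∃ a b r s, f = single a r ∧ g = single b s := by
  have nonempty_support {x : AddMonoidAlgebra R A} (hx : x ≠ 0) : x.coeff.support.Nonempty :=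
    Finsupp.support_nonempty_iff.mpr (by rwa [ne_eq, coeff_eq_zero])
  have hf := nonempty_support (left_ne_zero_of_mul_eq_one h)
  have hg := nonempty_support (right_ne_zero_of_mul_eq_one h)
  have hcard : #f.coeff.support * #g.coeff.support = 1 := by
    refine le_antisymm ?_ (Nat.mul_pos hf.card_pos hg.card_pos)
    by_contra! hlt
    have := one_lt_card_support_mul hlt
    rw [h, one_def, coeff_single, Finsupp.support_single _ one_ne_zero, card_singleton] at this
    exact lt_irrefl _ this
  obtain ⟨a, r, rfl⟩ :=
    exists_eq_single_of_card_support_eq_one (Nat.eq_one_of_mul_eq_one_right hcard)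
  obtain ⟨b, s, rfl⟩ :=
    exists_eq_single_of_card_support_eq_one (Nat.eq_one_of_mul_eq_one_left hcard)
  exact ⟨a, b, r, s, rfl, rfl⟩

theorem exists_eq_single_of_isUnit [AddMonoid A] [TwoUniqueSums A]
    {f : AddMonoidAlgebra R A} (hf : IsUnit f) :
    ∃ a r, IsUnit r ∧ f = single a r := by
  obtain ⟨u, rfl⟩ := hf
  obtain ⟨a, b, r, s, hu, hv⟩ := exists_eq_single_of_mul_eq_one u.mul_inv
  have mul_eq_one {x y : A} {c d : R} (h : single x c * single y d = 1) : c * d = 1 := by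
    rw [single_mul_single, one_def, single_inj] at h
    exact (h.resolve_right fun h => one_ne_zero h.2).2
  have hrs : r * s = 1 := mul_eq_one (by rw [← hu, ← hv]; exact u.mul_inv)
  have hsr : s * r = 1 := mul_eq_one (by rw [← hu, ← hv]; exact u.inv_mul)
  exact ⟨a, r, ⟨⟨r, s, hrs, hsr⟩, rfl⟩, hu⟩

end AddMonoidAlgebra

/-- For every unit `w` of `ℤ[ℤ × ℤ]`, the power `w^(2(m+1)(n+1))` is a monomial
with coefficient `1` supported on the subgroup `(m+1)ℤ × (n+1)ℤ`. -/
theorem unit_pow_is_novikov_monomial (m n : ℕ)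
    (w : (AddMonoidAlgebra ℤ (ℤ × ℤ))ˣ) :
    ∃ s t : ℤ, (w : AddMonoidAlgebra ℤ (ℤ × ℤ)) ^ (2 * (m + 1) * (n + 1)) =
      AddMonoidAlgebra.single (((m : ℤ) + 1) * s, ((n : ℤ) + 1) * t) 1 := by
  obtain ⟨⟨x, y⟩, r, hr, hw⟩ := AddMonoidAlgebra.exists_eq_single_of_isUnit w.isUnit
  refine ⟨2 * (n + 1) * x, 2 * (m + 1) * y, ?_⟩
  rw [hw, AddMonoidAlgebra.single_pow, mul_assoc, pow_mul, Int.isUnit_sq hr, one_pow,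
    Prod.smul_mk, nsmul_eq_mul, nsmul_eq_mul]
  push_cast
  congr 1
  exact Prod.ext (by ring) (by ring)
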